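/- arXiv:1002.1934 — 4 statements merged into one kernel-verified Lean document; each statement's English description precedes it below -/
import Mathlib

section
/- If X is a free-generating set of a group F, then for each x ∈ X, the centralizer of x in F equals the cyclic subgroup generated by x. -/
/-!
Transport along `FreeGroup X ≃* F`. In a free group, let `w` commute with a generator `a`. If the
reduced word of `w` began with a letter on another generator, `a * w` would be reduced of length
`|w| + 1`; then `w * a`, being equal to it, is also reduced, i.e. its word is `w ++ [a]`, and
comparing first letters gives a contradiction. So the word of `w` starts with `a` or `a⁻¹`;
peeling that letter off and inducting on the word shows `w ∈ ⟨a⟩`.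
-/

theorem Subgroup.map_centralizer_singleton {G H : Type*} [Group G] [Group H] (e : G ≃* H)
    (g : G) : (centralizer {g}).map e = centralizer {e g} := by
  ext h
  rw [map_equiv_eq_comap_symm, mem_comap, mem_centralizer_singleton_iff,
    mem_centralizer_singleton_iff, ← e.injective.eq_iff, map_mul, map_mul]
  simp

theorem Subgroup.zpowers_le_centralizer_singleton {G : Type*} [Group G] (g : G) :
    zpowers g ≤ centralizer {g} :=
  zpowers_le.mpr (mem_centralizer_singleton_iff.mpr rfl)

namespace FreeGroup

variable {α : Type*} {a : α}

theorem mk_singleton_mem_zpowers_of (b : Bool) : mk [(a, b)] ∈ Subgroup.zpowers (of a) := by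
  cases b
  · exact inv_mem (Subgroup.mem_zpowers (of a))
  · exact Subgroup.mem_zpowers (of a)

variable [DecidableEq α]

theorem IsReduced.toWord_mk {L : List (α × Bool)} (h : IsReduced L) : (mk L).toWord = L := by
  rw [FreeGroup.toWord_mk, h.reduce_eq]

theorem toWord_of_mul_of_fst_ne {w : FreeGroup α} {p : α × Bool} {t : List (α × Bool)}
    (hw : w.toWord = p :: t) (hp : p.1 ≠ a) : (of a * w).toWord = (a, true) :: w.toWord := by
  have hred : IsReduced ((a, true) :: w.toWord) := by
    rw [hw]
    exact List.isChain_cons_cons.mpr ⟨fun h => absurd h.symm hp, hw ▸ isReduced_toWord⟩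
  rw [← hred.toWord_mk, ← List.singleton_append, ← mul_mk, mk_toWord]
  rfl

theorem fst_eq_of_commute_of_toWord_eq_cons {w : FreeGroup α} {p : α × Bool}
    {t : List (α × Bool)} (hc : Commute w (of a)) (hw : w.toWord = p :: t) : p.1 = a := by
  by_contra hp
  have hleft := toWord_of_mul_of_fst_ne hw hp
  -- `w * of a` has the same length `|w| + 1` as `of a * w`, so no cancellation happens in it
  have hright : (w * of a).toWord = w.toWord ++ [(a, true)] :=
    (toWord_mul_sublist w (of a)).eq_of_length (by simp [hc.eq, hleft, toWord_of])
  rw [hc.eq, hleft, hw] at hright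
  exact hp (congrArg Prod.fst (List.cons.inj hright).1).symm

theorem mem_zpowers_of_of_commute {w : FreeGroup α} (hc : Commute w (of a)) :
    w ∈ Subgroup.zpowers (of a) := by
  induction hw : w.toWord generalizing w with
  | nil => rw [toWord_eq_nil_iff.mp hw]; exact one_mem _
  | cons p t ih =>
    obtain ⟨c, b⟩ := p
    obtain rfl : c = a := fst_eq_of_commute_of_toWord_eq_cons hc hw
    have hs := mk_singleton_mem_zpowers_of (a := c) b
    have hsplit : w = mk [(c, b)] * mk t := by rw [mul_mk, List.singleton_append, ← hw, mk_toWord]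
    have hu : (mk t).toWord = t :=
      (isReduced_toWord.infix (hw ▸ List.suffix_cons _ t).isInfix).toWord_mk
    have hcu : Commute (mk t) (of c) := by
      rw [show mk t = (mk [(c, b)])⁻¹ * w by rw [hsplit, inv_mul_cancel_left]]
      have hcs : Commute (mk [(c, b)]) (of c) := Subgroup.mem_centralizer_singleton_iff.mp
        (Subgroup.zpowers_le_centralizer_singleton _ hs)
      exact hcs.inv_left.mul_left hc
    rw [hsplit]
    exact mul_mem hs (ih hcu hu)

theorem centralizer_of (a : α) : Subgroup.centralizer {of a} = Subgroup.zpowers (of a) :=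
  le_antisymm (fun _ hw => mem_zpowers_of_of_commute (Subgroup.mem_centralizer_singleton_iff.mp hw))
    (Subgroup.zpowers_le_centralizer_singleton _)

end FreeGroup

/-- If `X` is a free-generating set of a group `F`, then for each `x ∈ X`, the
centralizer of `x` in `F` equals the cyclic subgroup generated by `x`. -/
theorem stmt_0 {F : Type*} [Group F] (X : Set F)
    (hX : Function.Bijective (FreeGroup.lift (Subtype.val : X → F))) :
    ∀ x ∈ X, Subgroup.centralizer {x} = Subgroup.zpowers x := by
  classical
  intro x hx
  let e : FreeGroup X ≃* F := MulEquiv.ofBijective _ hX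
  have hex : e (FreeGroup.of ⟨x, hx⟩) = x := FreeGroup.lift_apply_of
  rw [← hex, ← Subgroup.map_centralizer_singleton, FreeGroup.centralizer_of]
  exact MonoidHom.map_zpowers _ _
end

section
/- Let F be a group, f ∈ F, N ⊴ F with F/N infinite cyclic generated by fN, F̃ := F * ⟨z⟩, and Ñ the normal closure in F̃ of N ∪ {f z⁻¹}. Then Ñ is the internal free product N * ⟨{fⁱ (f z⁻¹) f⁻ⁱ : i ∈ ℤ}⟩, where the second factor is freely generated by the conjugates fⁱ(f z⁻¹)f⁻ⁱ for i ∈ ℤ; in particular, N is a free factor of Ñ. -/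
/-!
Choose `κ : F → ℤ` with kernel `N` and `κ f = 1`, and let `ℤ` act on `N ∗ F(ℤ)` by conjugation
with `f` on `N` and by the shift `xᵢ ↦ xᵢ₊₁` on the free basis. Then `g ↦ (g f^{-κ g}, κ g)`,
`z ↦ (x₀⁻¹, 1)` defines `Θ : F ∗ ⟨z⟩ → (N ∗ F(ℤ)) ⋊ ℤ`, which sends `fⁱ (f z⁻¹) f⁻ⁱ` to `xᵢ`;
so `Θ ∘ Φ` is the inclusion of `N ∗ F(ℤ)` and `Φ` is injective. The map `(m, k) ↦ Φ(m) fᵏ` is a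
left inverse of `Θ`, hence surjective, so the image of `Φ` is the image of a normal subgroup under
a surjection and is normal. Being generated by `N` and conjugates of `f z⁻¹`, it is the normal
closure of `N ∪ {f z⁻¹}`.
-/

open Monoid

theorem exists_ker_eq_of_zpowers_eq_top {F : Type*} [Group F] {N : Subgroup F} [N.Normal]
    [Infinite (F ⧸ N)] {f : F} (hgen : Subgroup.zpowers (f : F ⧸ N) = ⊤) :
    ∃ κ : F →* Multiplicative ℤ, κ.ker = N ∧ κ f = .ofAdd 1 :=
  ⟨(intEquivOfZPowersEqTop _ hgen).symm.toMonoidHom.comp (QuotientGroup.mk' N), by ext; simp,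
    by simp⟩

namespace FreeFactor

variable {F : Type*} [Group F] (κ : F →* Multiplicative ℤ) (f : F)

def shiftAction : Multiplicative ℤ →* MulAut (Coprod κ.ker (FreeGroup ℤ)) where
  toFun k := .coprodCongr (MulAut.conjNormal (f ^ k.toAdd))
    (FreeGroup.freeGroupCongr (.addLeft k.toAdd))
  map_one' := MulEquiv.toMonoidHom_injective <| Coprod.hom_ext (by ext; simp) (by ext; simp)
  map_mul' k l := MulEquiv.toMonoidHom_injective <|
    Coprod.hom_ext (by ext; simp [zpow_add]) (by ext; simp [add_assoc])

@[simp]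
lemma shiftAction_inl (k : Multiplicative ℤ) (n : κ.ker) :
    shiftAction κ f k (Coprod.inl n) = Coprod.inl (MulAut.conjNormal (f ^ k.toAdd) n) :=
  rfl

@[simp]
lemma shiftAction_inr_of (k : Multiplicative ℤ) (i : ℤ) :
    shiftAction κ f k (Coprod.inr (FreeGroup.of i)) = Coprod.inr (FreeGroup.of (k.toAdd + i)) :=
  rfl

def conjugatesHom : Coprod κ.ker (FreeGroup ℤ) →* Coprod F (FreeGroup Unit) :=
  Coprod.lift ((Coprod.inl : F →* Coprod F (FreeGroup Unit)).comp κ.ker.subtype)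
    (FreeGroup.lift fun i : ℤ =>
      Coprod.inl f ^ i * (Coprod.inl f * (Coprod.inr (FreeGroup.of ()))⁻¹) * Coprod.inl f ^ (-i))

@[simp]
lemma conjugatesHom_inl (n : κ.ker) : conjugatesHom κ f (Coprod.inl n) = Coprod.inl (n : F) :=
  rfl

@[simp]
lemma conjugatesHom_inr_of (i : ℤ) :
    conjugatesHom κ f (Coprod.inr (FreeGroup.of i)) =
      Coprod.inl f ^ i * (Coprod.inl f * (Coprod.inr (FreeGroup.of ()))⁻¹) *
        Coprod.inl f ^ (-i) := by
  simp [conjugatesHom]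

lemma conjugatesHom_comp_shiftAction (k : Multiplicative ℤ) :
    (conjugatesHom κ f).comp (shiftAction κ f k).toMonoidHom =
      (MulAut.conj (Coprod.inl (f ^ k.toAdd))).toMonoidHom.comp (conjugatesHom κ f) := by
  refine Coprod.hom_ext (by ext n; simp only [MonoidHom.comp_apply, MulEquiv.coe_toMonoidHom,
    shiftAction_inl, conjugatesHom_inl, MulAut.conjNormal_apply, MulAut.conj_apply, map_mul,
    map_inv]) ?_
  ext i
  simp only [MonoidHom.comp_apply, MulEquiv.coe_toMonoidHom, shiftAction_inr_of,
    conjugatesHom_inr_of, MulAut.conj_apply, map_zpow (Coprod.inl : F →* Coprod F (FreeGroup Unit))]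
  group

def ofSemidirectProduct :
    Coprod κ.ker (FreeGroup ℤ) ⋊[shiftAction κ f] Multiplicative ℤ →* Coprod F (FreeGroup Unit) :=
  SemidirectProduct.lift (conjugatesHom κ f) (Coprod.inl.comp (zpowersHom F f))
    (conjugatesHom_comp_shiftAction κ f)

@[simp]
lemma ofSemidirectProduct_inl (m : Coprod κ.ker (FreeGroup ℤ)) :
    ofSemidirectProduct κ f (SemidirectProduct.inl m) = conjugatesHom κ f m :=
  SemidirectProduct.lift_inl _ _ _ m

@[simp]
lemma ofSemidirectProduct_inr (k : Multiplicative ℤ) :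
    ofSemidirectProduct κ f (SemidirectProduct.inr k) = Coprod.inl (f ^ k.toAdd) :=
  SemidirectProduct.lift_inr _ _ _ k

lemma ofSemidirectProduct_comp_inl :
    (ofSemidirectProduct κ f).comp SemidirectProduct.inl = conjugatesHom κ f :=
  SemidirectProduct.lift_comp_inl _ _ _

variable {κ f}

def splitHom (hf : κ f = .ofAdd 1) :
    F →* Coprod κ.ker (FreeGroup ℤ) ⋊[shiftAction κ f] Multiplicative ℤ where
  toFun g := ⟨Coprod.inl ⟨g * f ^ (-(κ g).toAdd), by simp [hf, ← ofAdd_zsmul]⟩, κ g⟩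
  map_one' := SemidirectProduct.ext (by simp; exact map_one Coprod.inl) (map_one κ)
  map_mul' g h := by
    refine SemidirectProduct.ext ?_ (map_mul κ g h)
    simp only [SemidirectProduct.mul_left, shiftAction_inl, ← map_mul]
    congr 1
    ext
    simp only [Subgroup.coe_mul, MulAut.conjNormal_apply, map_mul, toAdd_mul, neg_add]
    group

lemma splitHom_coe (hf : κ f = .ofAdd 1) (n : κ.ker) :
    splitHom hf n = SemidirectProduct.inl (Coprod.inl n) := by
  have hn : κ n = 1 := n.2
  refine SemidirectProduct.ext ?_ hn
  simp [splitHom, hn]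

lemma splitHom_self (hf : κ f = .ofAdd 1) : splitHom hf f = SemidirectProduct.inr (.ofAdd 1) := by
  refine SemidirectProduct.ext ?_ hf
  simp [splitHom, hf]
  exact map_one Coprod.inl

def toSemidirectProduct (hf : κ f = .ofAdd 1) :
    Coprod F (FreeGroup Unit) →* Coprod κ.ker (FreeGroup ℤ) ⋊[shiftAction κ f] Multiplicative ℤ :=
  Coprod.lift (splitHom hf) (FreeGroup.lift fun _ =>
    (SemidirectProduct.inl (Coprod.inr (FreeGroup.of 0)))⁻¹ * SemidirectProduct.inr (.ofAdd 1))

lemma toSemidirectProduct_conjugate (hf : κ f = .ofAdd 1) (i : ℤ) :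
    toSemidirectProduct hf (Coprod.inl f ^ i * (Coprod.inl f * (Coprod.inr (FreeGroup.of ()))⁻¹) *
      Coprod.inl f ^ (-i)) = SemidirectProduct.inl (Coprod.inr (FreeGroup.of i)) := by
  have hz : toSemidirectProduct hf (Coprod.inl f * (Coprod.inr (FreeGroup.of ()))⁻¹) =
      SemidirectProduct.inl (Coprod.inr (FreeGroup.of 0)) := by
    simp [toSemidirectProduct, splitHom_self]
  have hf' : toSemidirectProduct hf (Coprod.inl f) = SemidirectProduct.inr (.ofAdd 1) :=
    splitHom_self hf
  have hpow : (SemidirectProduct.inr (.ofAdd 1) :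
      Coprod κ.ker (FreeGroup ℤ) ⋊[shiftAction κ f] Multiplicative ℤ) ^ i =
        SemidirectProduct.inr (.ofAdd i) := by
    rw [← map_zpow, ← ofAdd_zsmul, smul_eq_mul, mul_one]
  rw [map_mul, map_mul, hz, zpow_neg, map_inv, map_zpow, hf', hpow, ← map_inv,
    ← SemidirectProduct.inl_aut]
  simp

lemma toSemidirectProduct_comp_conjugatesHom (hf : κ f = .ofAdd 1) :
    (toSemidirectProduct hf).comp (conjugatesHom κ f) = SemidirectProduct.inl := by
  refine Coprod.hom_ext (MonoidHom.ext fun n => splitHom_coe hf n)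
    (FreeGroup.ext_hom _ _ fun i => ?_)
  simp only [MonoidHom.comp_apply, conjugatesHom_inr_of]
  exact toSemidirectProduct_conjugate hf i

lemma ofSemidirectProduct_comp_toSemidirectProduct (hf : κ f = .ofAdd 1) :
    (ofSemidirectProduct κ f).comp (toSemidirectProduct hf) = MonoidHom.id _ :=
  Coprod.hom_ext (by ext; simp [toSemidirectProduct, splitHom, SemidirectProduct.mk_eq_inl_mul_inr])
    (by ext; simp [toSemidirectProduct])

theorem conjugatesHom_injective (hf : κ f = .ofAdd 1) : Function.Injective (conjugatesHom κ f) := by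
  refine Function.Injective.of_comp (f := toSemidirectProduct hf) ?_
  rw [← MonoidHom.coe_comp, toSemidirectProduct_comp_conjugatesHom]
  exact SemidirectProduct.inl_injective

theorem normal_range_conjugatesHom (hf : κ f = .ofAdd 1) : (conjugatesHom κ f).range.Normal := by
  have hsurj : Function.Surjective (ofSemidirectProduct κ f) :=
    Function.LeftInverse.surjective (g := toSemidirectProduct hf)
      (DFunLike.congr_fun (ofSemidirectProduct_comp_toSemidirectProduct hf))
  rw [← ofSemidirectProduct_comp_inl, MonoidHom.range_comp,
    SemidirectProduct.range_inl_eq_ker_rightHom]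
  exact (MonoidHom.normal_ker _).map _ hsurj

theorem range_conjugatesHom (hf : κ f = .ofAdd 1) :
    (conjugatesHom κ f).range = Subgroup.normalClosure
      (Coprod.inl '' (κ.ker : Set F) ∪ {Coprod.inl f * (Coprod.inr (FreeGroup.of ()))⁻¹}) := by
  have := normal_range_conjugatesHom hf
  refine le_antisymm ?_ (Subgroup.normalClosure_le_normal ?_)
  · rw [conjugatesHom, Coprod.range_lift]
    refine sup_le ?_ (FreeGroup.range_lift_le ?_)
    · rintro _ ⟨n, rfl⟩
      exact Subgroup.subset_normalClosure (Or.inl ⟨n, n.2, rfl⟩)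
    · rintro _ ⟨i, rfl⟩
      have hmem : Coprod.inl f * (Coprod.inr (FreeGroup.of ()))⁻¹ ∈ Subgroup.normalClosure
          (Coprod.inl '' (κ.ker : Set F) ∪ {Coprod.inl f * (Coprod.inr (FreeGroup.of ()))⁻¹}) :=
        Subgroup.subset_normalClosure (Set.mem_union_right _ rfl)
      simpa only [zpow_neg, SetLike.mem_coe] using
        Subgroup.normalClosure_normal.conj_mem _ hmem (Coprod.inl f ^ i)
  · rintro _ (⟨n, hn, rfl⟩ | rfl)
    · exact ⟨Coprod.inl ⟨n, hn⟩, rfl⟩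
    · exact ⟨Coprod.inr (FreeGroup.of 0), by simp⟩

end FreeFactor

/-- With `F̃ = F ∗ ⟨z⟩` and `Ñ` the normal closure of `N ∪ {f z⁻¹}`, the subgroup
`Ñ` is the internal free product of `N` and the free group on the conjugates
`fⁱ (f z⁻¹) f⁻ⁱ`, `i ∈ ℤ`: the canonical homomorphism
`N ∗ F(ℤ) → F̃` is injective with image `Ñ`.  In particular `N` is a free
factor of `Ñ`. -/
theorem stmt_7 {F : Type*} [Group F] (N : Subgroup F) [N.Normal] (f : F)
    (hgen : Subgroup.zpowers ((QuotientGroup.mk f : F ⧸ N)) = ⊤)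
    (hinf : Infinite (F ⧸ N))
    (z : Coprod F (FreeGroup Unit)) (hz : z = Coprod.inr (FreeGroup.of ()))
    (Φ : Coprod N (FreeGroup ℤ) →* Coprod F (FreeGroup Unit))
    (hΦ : Φ = Coprod.lift ((Coprod.inl : F →* Coprod F (FreeGroup Unit)).comp N.subtype)
      (FreeGroup.lift (fun i : ℤ =>
        (Coprod.inl f) ^ i * (Coprod.inl f * z⁻¹) * (Coprod.inl f) ^ (-i)))) :
    Function.Injective Φ ∧
    Φ.range = Subgroup.normalClosure
      ((Coprod.inl '' (N : Set F)) ∪ {Coprod.inl f * z⁻¹}) := by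
  obtain ⟨κ, rfl, hf⟩ := exists_ker_eq_of_zpowers_eq_top hgen
  subst hz hΦ
  exact ⟨FreeFactor.conjugatesHom_injective hf, FreeFactor.range_conjugatesHom hf⟩
end

section
/- Let N be a group that is a free product ∗_{i∈I} C_i of finite cyclic groups C_i. Then every torsion-free subgroup of N is free. -/
/-!
A torsion-free `H ≤ N = ∗ᵢ Cᵢ` contains no conjugate of a nontrivial power of the generator `xᵢ`
of `Cᵢ`, so `⟨xᵢ⟩` acts freely on `N ⧸ H` and the action groupoid of `N` on `N ⧸ H` is generated
by the edges `a ⟶ xᵢ • a`, which form disjoint cycles of length `|Cᵢ|`. Removing one edge from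
every cycle leaves a free generating quiver. A functor to a group `X` is a homomorphism
`N →* (N ⧸ H → X) ⋊ N`; labels on the remaining edges of a cycle are the coboundary of the
potential obtained by multiplying them along the cycle, so the relation `xᵢ ^ |Cᵢ| = 1` holds
automatically, and conversely this relation forces the value on the removed edge. As in the proof
of Nielsen–Schreier, the vertex group of a connected free groupoid is free, and the vertex group
at the coset `H` is `H`.
-/

open CategoryTheory MulAction Subgroup

section Orbits

variable {G A : Type*} [Group G] [MulAction G A] (x : G)

noncomputable def zpowersRep (a : A) : A :=
  (Quotient.mk (orbitRel (zpowers x) A) a).out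

theorem zpowersRep_smul_of_mem {g : G} (hg : g ∈ zpowers x) (a : A) :
    zpowersRep x (g • a) = zpowersRep x a :=
  congrArg Quotient.out <| Quotient.sound <| orbitRel_apply.mpr ⟨⟨g, hg⟩, rfl⟩

theorem exists_pow_smul_zpowersRep (hx : IsOfFinOrder x) (a : A) :
    ∃ k < orderOf x, x ^ k • zpowersRep x a = a := by
  obtain ⟨g, hg⟩ := orbitRel_apply.mp (Quotient.mk_out (s := orbitRel (zpowers x) A) a)
  obtain ⟨n, hn⟩ := (Submonoid.mem_powers_iff _ _).mp
    (hx.mem_powers_iff_mem_zpowers.mpr (inv_mem g.2))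
  refine ⟨n % orderOf x, Nat.mod_lt _ hx.orderOf_pos, ?_⟩
  rw [pow_mod_orderOf, hn, zpowersRep, ← hg]
  exact inv_smul_smul (g : G) a

variable {x}

theorem pow_smul_inj_of_lt_orderOf (hfree : ∀ g ∈ zpowers x, ∀ a : A, g • a = a → g = 1)
    {i j : ℕ} (hi : i < orderOf x) (hj : j < orderOf x) {a : A} (h : x ^ i • a = x ^ j • a) :
    i = j := by
  refine pow_injOn_Iio_orderOf hi hj (inv_mul_eq_one.mp (hfree _ ?_ a ?_)).symm
  · exact mul_mem (inv_mem (pow_mem (mem_zpowers x) j)) (pow_mem (mem_zpowers x) i)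
  · rw [mul_smul, h, inv_smul_smul]

theorem exists_potential (hx : IsOfFinOrder x)
    (hfree : ∀ g ∈ zpowers x, ∀ a : A, g • a = a → g = 1) {X : Type*} [Group X] (ℓ : A → X) :
    ∃ δ : A → X, ∀ b, b ≠ zpowersRep x b → δ b = ℓ b * δ (x⁻¹ • b) := by
  choose idx hidx_lt hidx using exists_pow_smul_zpowersRep x hx (A := A)
  -- `δ b` is the product of the labels along the path `zpowersRep x b ⟶ ⋯ ⟶ b`.
  refine ⟨fun b => ((List.range (idx b)).map fun j =>
      ℓ (x ^ (j + 1) • zpowersRep x b)).reverse.prod, fun b hb => ?_⟩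
  have hrep : zpowersRep x (x⁻¹ • b) = zpowersRep x b :=
    zpowersRep_smul_of_mem x (inv_mem (mem_zpowers x)) b
  have hsucc : x ^ (idx (x⁻¹ • b) + 1) • zpowersRep x b = b := by
    rw [pow_succ', mul_smul, ← hrep, hidx, smul_inv_smul]
  have hlt : idx (x⁻¹ • b) + 1 < orderOf x := by
    refine lt_of_le_of_ne (hidx_lt _) fun heq => hb ?_
    calc b = x ^ orderOf x • zpowersRep x b := by rw [← heq, hsucc]
      _ = zpowersRep x b := by rw [pow_orderOf_eq_one, one_smul]
  have hidx_b : idx b = idx (x⁻¹ • b) + 1 :=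
    pow_smul_inj_of_lt_orderOf hfree (hidx_lt b) hlt ((hidx b).trans hsucc.symm)
  simp [hidx_b, List.range_succ, hrep, hsucc]

end Orbits

namespace SemidirectProduct

variable {G A X : Type*} [Group G] [MulAction G A] [Group X]

theorem right_pow (p : (A → X) ⋊[mulAutArrow] G) (n : ℕ) : (p ^ n).right = p.right ^ n :=
  map_pow (rightHom : (A → X) ⋊[mulAutArrow] G →* G) p n

theorem mulAutArrow_mul_left_apply (p q : (A → X) ⋊[mulAutArrow] G) (b : A) :
    (p * q).left b = p.left b * q.left (p.right⁻¹ • b) :=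
  rfl

theorem pow_succ_left_pow_smul {x : G} {p : (A → X) ⋊[mulAutArrow] G} (hp : p.right = x)
    (n : ℕ) (r : A) : (p ^ (n + 1)).left (x ^ n • r) = (p ^ n).left (x ^ n • r) * p.left r := by
  rw [pow_succ, mulAutArrow_mul_left_apply, right_pow, hp, inv_smul_smul]

theorem pow_left_pow_smul_congr {x : G} {p q : (A → X) ⋊[mulAutArrow] G} (hp : p.right = x)
    (hq : q.right = x) (r : A) (n : ℕ)
    (hpq : ∀ k, 0 < k → k ≤ n → p.left (x ^ k • r) = q.left (x ^ k • r)) :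
    (p ^ n).left (x ^ n • r) = (q ^ n).left (x ^ n • r) := by
  induction n with
  | zero => rfl
  | succ n ih =>
    have hstep : ∀ s : (A → X) ⋊[mulAutArrow] G, s.right = x →
        (s ^ (n + 1)).left (x ^ (n + 1) • r) =
          s.left (x ^ (n + 1) • r) * (s ^ n).left (x ^ n • r) := by
      intro s hs
      rw [pow_succ', mulAutArrow_mul_left_apply, hs, pow_succ', mul_smul, inv_smul_smul]
    rw [hstep p hp, hstep q hq, hpq (n + 1) n.succ_pos le_rfl,
      ih fun k hk hkn => hpq k hk (hkn.trans n.le_succ)]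

theorem eq_of_left_eq_off_zpowersRep {x : G} (hx : IsOfFinOrder x)
    (hfree : ∀ g ∈ zpowers x, ∀ a : A, g • a = a → g = 1) {p q : (A → X) ⋊[mulAutArrow] G}
    (hp : p.right = x) (hq : q.right = x) (hpm : p ^ orderOf x = 1) (hqm : q ^ orderOf x = 1)
    (hpq : ∀ b, b ≠ zpowersRep x b → p.left b = q.left b) : p = q := by
  refine SemidirectProduct.ext (funext fun r => ?_) (hp.trans hq.symm)
  by_cases hr : r = zpowersRep x r
  swap
  · exact hpq r hr
  obtain ⟨n, hn⟩ : ∃ n, orderOf x = n + 1 := Nat.exists_eq_succ_of_ne_zero hx.orderOf_pos.ne'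
  have hleft : ∀ s : (A → X) ⋊[mulAutArrow] G, s.right = x → s ^ orderOf x = 1 →
      s.left r = ((s ^ n).left (x ^ n • r))⁻¹ := by
    intro s hs hsm
    have h := pow_succ_left_pow_smul hs n r
    rw [← hn, hsm] at h
    exact eq_inv_of_mul_eq_one_right h.symm
  rw [hleft p hp hpm, hleft q hq hqm, pow_left_pow_smul_congr hp hq r n fun k hk hkn => hpq _ ?_]
  rw [zpowersRep_smul_of_mem x (pow_mem (mem_zpowers x) k), ← hr]
  exact fun h => pow_ne_one_of_lt_orderOf hk.ne' (by omega)
    (hfree _ (pow_mem (mem_zpowers x) k) r h)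

end SemidirectProduct

theorem CategoryTheory.ActionCategory.eq_uncurry_of_curry_eq {G X H : Type*} [Group G]
    [MulAction G X] [Group H] {E : ActionCategory G X ⥤ SingleObj H}
    {F : G →* (X → H) ⋊[mulAutArrow] G} (sane : ∀ g, (F g).right = g) (h : curry E = F) :
    E = uncurry F sane := by
  subst h
  apply Functor.hext
  · intro
    apply Unit.ext
  · exact ActionCategory.cases fun t g => heq_of_eq rfl

section FreeProduct

open Monoid SemidirectProduct ActionCategory

universe u v w

variable {ι : Type u} {C : ι → Type v} [∀ i, Group (C i)] {A : Type w} [MulAction (CoprodI C) A]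

noncomputable def coboundaryHom {X : Type*} [Group X] (δ : ι → A → X) :
    CoprodI C →* (A → X) ⋊[mulAutArrow] CoprodI C :=
  CoprodI.lift fun i => (MulAut.conj (inl (δ i))).toMonoidHom.comp (inr.comp CoprodI.of)

theorem coboundaryHom_right {X : Type*} [Group X] (δ : ι → A → X) (n : CoprodI C) :
    (coboundaryHom δ n).right = n := by
  suffices rightHom.comp (coboundaryHom δ) = MonoidHom.id _ from DFunLike.congr_fun this n
  refine CoprodI.ext_hom _ _ fun i => MonoidHom.ext fun c => ?_
  simp [coboundaryHom]

theorem coboundaryHom_of_left {X : Type*} [Group X] (δ : ι → A → X) {i : ι} (c : C i) (b : A) :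
    (coboundaryHom δ (CoprodI.of c)).left b = δ i b * (δ i ((CoprodI.of c)⁻¹ • b))⁻¹ := by
  simp [coboundaryHom, mulAutArrow_mul_left_apply]

variable [∀ i, Finite (C i)]

theorem hom_eq_of_left_eq_off_zpowersRep {X : Type*} [Group X] {g : ∀ i, C i}
    (hg : ∀ i (c : C i), c ∈ zpowers (g i))
    (hfree : ∀ n : CoprodI C, IsOfFinOrder n → ∀ a : A, n • a = a → n = 1)
    {φ ψ : CoprodI C →* (A → X) ⋊[mulAutArrow] CoprodI C}
    (hφ : ∀ n, (φ n).right = n) (hψ : ∀ n, (ψ n).right = n)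
    (h : ∀ i b, b ≠ zpowersRep (CoprodI.of (g i)) b →
      (φ (CoprodI.of (g i))).left b = (ψ (CoprodI.of (g i))).left b) :
    φ = ψ := by
  refine CoprodI.ext_hom _ _ fun i => MonoidHom.eq_of_eqOn_dense (s := {g i}) ?_ ?_
  · rw [← zpowers_eq_closure, eq_top_iff']
    exact hg i
  rintro _ rfl
  have hx : IsOfFinOrder (CoprodI.of (g i)) := CoprodI.of.isOfFinOrder (isOfFinOrder_of_finite _)
  have hpow : ∀ χ : CoprodI C →* (A → X) ⋊[mulAutArrow] CoprodI C,
      χ (CoprodI.of (g i)) ^ orderOf (CoprodI.of (g i)) = 1 :=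
    fun χ => by rw [← map_pow, pow_orderOf_eq_one, map_one]
  exact eq_of_left_eq_off_zpowersRep hx (fun n hn => hfree n (hx.of_mem_zpowers hn)) (hφ _)
    (hψ _) (hpow φ) (hpow ψ) (h i)

/- The generating edges are the `a ⟶ of (g i) • a` except, in every orbit of
`zpowers (of (g i))`, the one ending at the orbit's representative. -/
noncomputable abbrev actionGroupoidIsFreeOfCyclic (g : ∀ i, C i)
    (hg : ∀ i (c : C i), c ∈ zpowers (g i))
    (hfree : ∀ n : CoprodI C, IsOfFinOrder n → ∀ a : A, n • a = a → n = 1) :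
    IsFreeGroupoid (ActionCategory (CoprodI C) A) where
  quiverGenerators := ⟨fun a b => {i : ULift.{v} ι //
    CoprodI.of (g i.down) • a.back = b.back ∧ b.back ≠ zpowersRep (CoprodI.of (g i.down)) b.back}⟩
  of e := ⟨_, e.2.1⟩
  unique_lift := by
    classical
    intro X _ f
    set x : ι → CoprodI C := fun i => CoprodI.of (g i)
    have hx : ∀ i, IsOfFinOrder (x i) := fun i =>
      CoprodI.of.isOfFinOrder (isOfFinOrder_of_finite _)
    let ℓ : ι → A → X := fun i b => if h : b ≠ zpowersRep (x i) b then
        @f (((x i)⁻¹ • b : A) : ActionCategory (CoprodI C) A) (b : ActionCategory (CoprodI C) A)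
          ⟨ULift.up i, smul_inv_smul _ b, h⟩ else 1
    choose δ hδ using fun i =>
      exists_potential (hx i) (fun n hn => hfree n ((hx i).of_mem_zpowers hn)) (ℓ i)
    have hlabel : ∀ i b (hb : b ≠ zpowersRep (x i) b), (coboundaryHom δ (x i)).left b =
        @f (((x i)⁻¹ • b : A) : ActionCategory (CoprodI C) A) (b : ActionCategory (CoprodI C) A)
          ⟨ULift.up i, smul_inv_smul _ b, hb⟩ := by
      intro i b hb
      rw [coboundaryHom_of_left, hδ i b hb, mul_inv_cancel_right]
      exact dif_pos hb
    refine ⟨uncurry (coboundaryHom δ) (coboundaryHom_right δ), ?_, fun E hE => ?_⟩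
    · rintro ⟨⟨⟩, a : A⟩ ⟨⟨⟩, b : A⟩ ⟨⟨i⟩, h : x i • a = b, hb⟩
      cases inv_smul_eq_iff.mpr h.symm
      exact hlabel i b hb
    refine eq_uncurry_of_curry_eq _ (hom_eq_of_left_eq_off_zpowersRep hg hfree (fun _ => rfl)
      (coboundaryHom_right δ) fun i b hb => ?_)
    exact (hE (((x i)⁻¹ • b : A) : ActionCategory (CoprodI C) A) (b : ActionCategory _ A)
      ⟨ULift.up i, smul_inv_smul _ b, hb⟩).trans (hlabel i b hb).symm

end FreeProduct

theorem Subgroup.eq_one_of_smul_eq_of_isOfFinOrder {G : Type*} [Group G] {H : Subgroup G}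
    (htf : ∀ h ∈ H, IsOfFinOrder h → h = 1) {n : G} (hn : IsOfFinOrder n) (a : G ⧸ H)
    (h : n • a = a) : n = 1 := by
  obtain ⟨y, rfl⟩ := QuotientGroup.mk_surjective a
  have hmem : MulAut.conj y⁻¹ n ∈ H := by
    rw [MulAction.Quotient.smul_mk, QuotientGroup.eq] at h
    simpa [mul_assoc] using inv_mem h
  exact (MulAut.conj y⁻¹).map_eq_one_iff.mp
    (htf _ hmem ((MulAut.conj y⁻¹).toMonoidHom.isOfFinOrder hn))

theorem Subgroup.isFreeGroup_of_isFreeGroupoid {G : Type*} [Group G] (H : Subgroup G)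
    [IsFreeGroupoid (ActionCategory G (G ⧸ H))] : IsFreeGroup H := by
  -- Instance search does not find these through the groupoid structure of `ActionCategory`.
  let r := ActionCategory.objEquiv G (G ⧸ H) ↑(1 : G)
  let := End.group r
  have hconn : IsConnected (ActionCategory G (G ⧸ H)) := inferInstance
  have := @IsFreeGroupoid.endIsFreeOfConnectedFree _ _ hconn _ r
  exact @IsFreeGroup.ofMulEquiv _ _ this _ _ (ActionCategory.endMulEquivSubgroup H)

/-- Every torsion-free subgroup of a free product of finite cyclic groups is
free. -/
theorem stmt_13 {ι : Type*} (C : ι → Type*) [∀ i, Group (C i)]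
    [∀ i, Finite (C i)] (hcyc : ∀ i, IsCyclic (C i))
    (H : Subgroup (Monoid.CoprodI C))
    (htf : ∀ h ∈ H, IsOfFinOrder h → h = 1) :
    IsFreeGroup H := by
  choose g hg using fun i => (hcyc i).exists_generator
  have := actionGroupoidIsFreeOfCyclic g hg fun n hn => H.eq_one_of_smul_eq_of_isOfFinOrder htf hn
  exact H.isFreeGroup_of_isFreeGroupoid
end

section
/- Let G be a group with a normal subgroup N such that N is a free product of finite cyclic groups and G/N is locally indicable. Then every torsion-free subgroup of G is locally indicable. -/
/-!
A torsion-free subgroup `K` of a free product of finite groups acts freely and without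
inversions on the Bass–Serre tree of the free product, since vertex stabilisers are trivial or
conjugate to a finite factor. For such an action on a tree, choose `k ≠ 1` and a vertex `v₀`
minimising the distance from `v₀` to `k • v₀`, and let `e` be the first edge of the geodesic
from `v₀` to `k • v₀`. Counting with sign the `K`-translates of `e` crossed on the way from `v₀`
to `g • v₀` is a homomorphism `K → ℤ` (in a tree the count does not depend on the walk), and
minimality forces the geodesic of `k` to cross translates of `e` only forwards, so `k` has
positive image.

In `G`, a finitely generated subgroup of a torsion-free `H` either maps nontrivially to the
locally indicable `G ⧸ N`, or lies in `N`, a free product of finite groups.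
-/
theorem MonoidHom.exists_surjective_int_of_ne_one {A : Type*} [Group A]
    (φ : A →* Multiplicative ℤ) (hφ : φ ≠ 1) :
    ∃ ψ : A →* Multiplicative ℤ, Function.Surjective ψ := by
  obtain ⟨r, hgen_r⟩ := IsCyclic.exists_generator (α := φ.range)
  have hr : r ≠ 1 := by
    rintro rfl
    refine hφ (MonoidHom.ext fun a => ?_)
    have h := hgen_r (φ.rangeRestrict a)
    rw [Subgroup.zpowers_one_eq_bot, Subgroup.mem_bot] at h
    exact congrArg Subtype.val h
  have hgen : ∀ x : Multiplicative ℤ, x ∈ Subgroup.zpowers (Multiplicative.ofAdd 1) :=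
    fun x => Subgroup.mem_zpowers_iff.mpr ⟨x.toAdd, by rw [← ofAdd_zsmul]; simp⟩
  have hord : orderOf r = orderOf (Multiplicative.ofAdd (1 : ℤ)) := by
    rw [orderOf_eq_zero_iff.mpr ((isOfFinOrder_iff_eq_one r).not.mpr hr),
      orderOf_eq_zero_iff.mpr ((isOfFinOrder_iff_eq_one _).not.mpr (by decide))]
  exact ⟨(mulEquivOfOrderOfEq hgen_r hgen hord).toMonoidHom.comp φ.rangeRestrict,
    (mulEquivOfOrderOfEq hgen_r hgen hord).surjective.comp φ.rangeRestrict_surjective⟩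

namespace SimpleGraph

variable {V : Type*} {G : SimpleGraph V}

namespace Walk

def dartSum (c : V → V → ℤ) {u v : V} (p : G.Walk u v) : ℤ :=
  (p.darts.map fun d => c d.toProd.1 d.toProd.2).sum

variable (c : V → V → ℤ)

@[simp]
theorem dartSum_nil {u : V} : (nil : G.Walk u u).dartSum c = 0 := rfl

@[simp]
theorem dartSum_cons {u v w : V} (h : G.Adj u v) (p : G.Walk v w) :
    (cons h p).dartSum c = c u v + p.dartSum c := by
  simp [dartSum]

@[simp]
theorem dartSum_append {u v w : V} (p : G.Walk u v) (q : G.Walk v w) :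
    (p.append q).dartSum c = p.dartSum c + q.dartSum c := by
  simp [dartSum]

@[simp]
theorem dartSum_copy {u v u' v' : V} (p : G.Walk u v) (hu : u = u') (hv : v = v') :
    (p.copy hu hv).dartSum c = p.dartSum c := by
  simp [dartSum]

theorem dartSum_map {f : G →g G} (hf : ∀ u v, c (f u) (f v) = c u v) {u v : V}
    (p : G.Walk u v) : (p.map f).dartSum c = p.dartSum c := by
  simp [dartSum, darts_map, Function.comp_def, hf]

end Walk

theorem IsAcyclic.dartSum_bypass [DecidableEq V] (hG : G.IsAcyclic) {c : V → V → ℤ}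
    (hc : ∀ u v, c v u = -c u v) : ∀ {u v : V} (p : G.Walk u v), p.bypass.dartSum c = p.dartSum c
  | _, _, .nil => rfl
  | u, _, .cons (v := w) h p => by
    rw [Walk.dartSum_cons, ← hG.dartSum_bypass hc p, Walk.bypass]
    split_ifs with hs
    · have hback : p.bypass.takeUntil u hs = .cons h.symm .nil :=
        congrArg Subtype.val ((hG.subsingleton_path w u).elim
          ⟨_, p.bypass_isPath.takeUntil hs⟩ ⟨_, by simp [h.ne.symm]⟩)
      conv_rhs => rw [← p.bypass.take_spec hs, Walk.dartSum_append, hback]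
      simp [hc u w]
    · rw [Walk.dartSum_cons]

theorem IsAcyclic.dartSum_eq (hG : G.IsAcyclic) {c : V → V → ℤ} (hc : ∀ u v, c v u = -c u v)
    {u v : V} (p q : G.Walk u v) : p.dartSum c = q.dartSum c := by
  classical
  have hpq : p.bypass = q.bypass := congrArg Subtype.val
    ((hG.subsingleton_path u v).elim ⟨_, p.bypass_isPath⟩ ⟨_, q.bypass_isPath⟩)
  rw [← hG.dartSum_bypass hc p, ← hG.dartSum_bypass hc q, hpq]

section Action

open MulAction

variable {K : Type*} [Group K] [MulAction K V]

section Hom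

variable (hact : ∀ (g : K) {u v : V}, G.Adj u v → G.Adj (g • u) (g • v))

def smulHom (g : K) : G →g G :=
  ⟨(g • ·), hact g⟩

@[simp]
theorem smulHom_apply (g : K) (v : V) : smulHom hact g v = g • v := rfl

variable (hG : G.IsTree) {c : V → V → ℤ} (hc : ∀ u v, c v u = -c u v)
  (hcK : ∀ (g : K) u v, c (g • u) (g • v) = c u v)

noncomputable def dartSumHom (v₀ : V) : K →* Multiplicative ℤ :=
  MonoidHom.mk' (fun g => .ofAdd ((hG.connected.preconnected v₀ (g • v₀)).some.dartSum c))
    fun g h => by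
      let p := (hG.connected.preconnected v₀ (g • v₀)).some
      let q := (hG.connected.preconnected v₀ (h • v₀)).some
      let r : G.Walk (g • v₀) ((g * h) • v₀) :=
        (q.map (smulHom hact g)).copy rfl (mul_smul g h v₀).symm
      have hr : r.dartSum c = q.dartSum c :=
        (Walk.dartSum_copy c _ _ _).trans (Walk.dartSum_map c (f := smulHom hact g) (hcK g) q)
      rw [← ofAdd_add, hG.isAcyclic.dartSum_eq hc _ (p.append r), Walk.dartSum_append, hr]

theorem dartSumHom_apply {v₀ : V} {g : K} (p : G.Walk v₀ (g • v₀)) :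
    dartSumHom hact hG hc hcK v₀ g = .ofAdd (p.dartSum c) :=
  congrArg Multiplicative.ofAdd (hG.isAcyclic.dartSum_eq hc _ p)

end Hom

variable (K) in
open Classical in
noncomputable def orbitWeight (v₀ w₁ u v : V) : ℤ :=
  (if (u, v) ∈ orbit K (v₀, w₁) then 1 else 0) - if (v, u) ∈ orbit K (v₀, w₁) then 1 else 0

theorem orbitWeight_swap (v₀ w₁ u v : V) :
    orbitWeight K v₀ w₁ v u = -orbitWeight K v₀ w₁ u v := by
  simp only [orbitWeight]
  ring

theorem orbitWeight_smul (v₀ w₁ : V) (g : K) (u v : V) :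
    orbitWeight K v₀ w₁ (g • u) (g • v) = orbitWeight K v₀ w₁ u v := by
  have key : ∀ x y : V, (g • x, g • y) ∈ orbit K (v₀, w₁) ↔ (x, y) ∈ orbit K (v₀, w₁) :=
    fun x y => by rw [← Prod.smul_mk, mem_orbit_symm, orbit_smul, mem_orbit_symm]
  classical
  simp only [orbitWeight, key]

theorem exists_minimal_displacement [Nontrivial K] (hconn : G.Connected) :
    ∃ k : K, k ≠ 1 ∧ ∃ (v₀ : V) (p : G.Walk v₀ (k • v₀)), p.IsPath ∧
      ∀ g : K, g ≠ 1 → ∀ (v : V) (q : G.Walk v (g • v)), p.length ≤ q.length := by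
  classical
  have hex : ∃ n, ∃ g : K, g ≠ 1 ∧ ∃ (v : V) (q : G.Walk v (g • v)), q.length = n := by
    obtain ⟨g, hg⟩ := exists_ne (1 : K)
    obtain ⟨v⟩ := hconn.nonempty
    exact ⟨_, g, hg, v, (hconn.preconnected v (g • v)).some, rfl⟩
  obtain ⟨k, hk, v₀, q, hq⟩ := Nat.find_spec hex
  refine ⟨k, hk, v₀, q.bypass, q.bypass_isPath, fun g hg v q' => ?_⟩
  calc q.bypass.length ≤ q.length := q.length_bypass_le_length
    _ = Nat.find hex := hq
    _ ≤ q'.length := Nat.find_min' hex ⟨g, hg, v, q', rfl⟩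

theorem swap_notMem_orbit_of_minimal (hfree : ∀ (g : K) (v : V), g • v = v → g = 1)
    (hinv : ∀ (g : K) (u v : V), G.Adj u v → g • u = v → g • v = u → g = 1)
    {k : K} (hk : k ≠ 1) {v₀ w₁ : V} (h : G.Adj v₀ w₁) (p : G.Walk w₁ (k • v₀))
    (hp : (Walk.cons h p).IsPath)
    (hmin : ∀ g : K, g ≠ 1 → ∀ (v : V) (q : G.Walk v (g • v)), (Walk.cons h p).length ≤ q.length)
    {d : G.Dart} (hd : d ∈ (Walk.cons h p).darts) :
    (d.toProd.2, d.toProd.1) ∉ orbit K (v₀, w₁) := by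
  -- A translate `g • (v₀, w₁)` crossed backwards puts `g • v₀` on the path, so minimality gives
  -- `g • v₀ = k • v₀`, i.e. `g = k`; then `k` either inverts the edge or moves `w₁` less far.
  classical
  rintro ⟨g, hg⟩
  obtain ⟨hgv, hgw⟩ := Prod.ext_iff.mp hg
  simp only [Prod.smul_fst, Prod.smul_snd] at hgv hgw
  have hv₀ : v₀ ∉ p.support := ((Walk.cons_isPath_iff h p).mp hp).2
  by_cases hg1 : g = 1
  · subst hg1
    rw [one_smul] at hgv
    have hsnd : d.toProd.2 ∈ p.support := by
      have := List.mem_map_of_mem (f := fun d : G.Dart => d.toProd.2) hd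
      rwa [Walk.map_snd_darts, Walk.support_cons, List.tail_cons] at this
    exact hv₀ (hgv ▸ hsnd)
  have hmem : g • v₀ ∈ (Walk.cons h p).support :=
    hgv ▸ Walk.dart_snd_mem_support_of_mem_darts _ hd
  have hend : g • v₀ = k • v₀ := by
    by_contra hne
    exact (Walk.length_takeUntil_lt_length hmem hne).not_ge (hmin g hg1 v₀ _)
  obtain rfl : g = k := by
    have := hfree (k⁻¹ * g) v₀ (by rw [mul_smul, hend, inv_smul_smul])
    exact (inv_mul_eq_one.mp this).symm
  rcases List.mem_cons.mp (Walk.darts_cons h p ▸ hd) with rfl | hd'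
  · exact hk (hinv g v₀ w₁ h hgv hgw)
  · have hmem' : g • w₁ ∈ p.support := hgw ▸ Walk.dart_fst_mem_support_of_mem_darts _ hd'
    have hshort := hmin g hk w₁ (p.takeUntil _ hmem')
    have hle := p.length_takeUntil_le_length hmem'
    rw [Walk.length_cons] at hshort
    omega

theorem one_le_dartSum_orbitWeight {v₀ w₁ v : V} (h : G.Adj v₀ w₁) (p : G.Walk w₁ v)
    (hswap : ∀ d ∈ (Walk.cons h p).darts, (d.toProd.2, d.toProd.1) ∉ orbit K (v₀, w₁)) :
    1 ≤ (Walk.cons h p).dartSum (orbitWeight K v₀ w₁) := by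
  classical
  have hweight : ∀ d ∈ (Walk.cons h p).darts,
      orbitWeight K v₀ w₁ d.toProd.1 d.toProd.2 = if d.toProd ∈ orbit K (v₀, w₁) then 1 else 0 :=
    fun d hd => by simp [orbitWeight, hswap d hd]
  have hfirst := hweight ⟨(v₀, w₁), h⟩ (by simp)
  rw [if_pos (mem_orbit_self _)] at hfirst
  have hrest : 0 ≤ p.dartSum (orbitWeight K v₀ w₁) :=
    List.sum_nonneg fun x hx => by
      obtain ⟨d, hd, rfl⟩ := List.mem_map.mp hx
      rw [hweight d (by simp [hd])]
      split_ifs <;> norm_num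
  rw [Walk.dartSum_cons]
  simp only at hfirst
  omega

theorem exists_surjective_int_of_isTree [Nontrivial K]
    (hact : ∀ (g : K) {u v : V}, G.Adj u v → G.Adj (g • u) (g • v)) (hG : G.IsTree)
    (hfree : ∀ (g : K) (v : V), g • v = v → g = 1)
    (hinv : ∀ (g : K) (u v : V), G.Adj u v → g • u = v → g • v = u → g = 1) :
    ∃ φ : K →* Multiplicative ℤ, Function.Surjective φ := by
  obtain ⟨k, hk, v₀, P, hP, hmin⟩ := exists_minimal_displacement (K := K) hG.connected
  have hPnil : ¬P.Nil := fun hnil => hk (hfree k v₀ hnil.eq.symm)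
  obtain ⟨w₁, h, p, rfl⟩ := Walk.not_nil_iff.mp hPnil
  have hpos := one_le_dartSum_orbitWeight h p
    fun d hd => swap_notMem_orbit_of_minimal hfree hinv hk h p hP hmin hd
  refine MonoidHom.exists_surjective_int_of_ne_one
    (dartSumHom hact hG (orbitWeight_swap v₀ w₁) (orbitWeight_smul v₀ w₁) v₀) fun h1 => ?_
  have hk0 := dartSumHom_apply hact hG (orbitWeight_swap v₀ w₁) (orbitWeight_smul v₀ w₁)
    (Walk.cons h p)
  rw [h1, MonoidHom.one_apply, eq_comm, ofAdd_eq_one] at hk0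
  omega

end Action

end SimpleGraph

open SimpleGraph

namespace Monoid.CoprodI

variable {ι : Type*} (C : ι → Type*) [∀ i, Group (C i)]

/-- The Bass–Serre tree of the free product: its vertices are the elements `m` (standing for the
cosets of the trivial group) and the cosets `m C i` of the factors, with `m` adjacent to each
`m C i`. -/
abbrev TreeVertex := CoprodI C ⊕ Σ i, CoprodI C ⧸ (of : C i →* CoprodI C).range

def tree : SimpleGraph (TreeVertex C) :=
  fromRel fun u v => ∃ (m : CoprodI C) (i : ι), u = .inl m ∧ v = .inr ⟨i, m⟩

variable {C}

@[simp]
theorem tree_adj_inl_inr {m : CoprodI C} {i : ι} {x : CoprodI C ⧸ (of : C i →* CoprodI C).range} :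
    (tree C).Adj (.inl m) (.inr ⟨i, x⟩) ↔ m = x := by
  simp [tree, eq_comm]

@[simp]
theorem not_tree_adj_inl_inl {m m' : CoprodI C} : ¬(tree C).Adj (.inl m) (.inl m') := by
  simp [tree]

@[simp]
theorem not_tree_adj_inr_inr {s s' : Σ i, CoprodI C ⧸ (of : C i →* CoprodI C).range} :
    ¬(tree C).Adj (.inr s) (.inr s') := by
  simp [tree]

theorem tree_adj_smul (g : CoprodI C) {u v : TreeVertex C} (h : (tree C).Adj u v) :
    (tree C).Adj (g • u) (g • v) := by
  have hR : ∀ u v : TreeVertex C, (∃ (m : CoprodI C) (i : ι), u = .inl m ∧ v = .inr ⟨i, m⟩) →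
      ∃ (m : CoprodI C) (i : ι), g • u = .inl m ∧ g • v = .inr ⟨i, m⟩ := by
    rintro _ _ ⟨m, i, rfl, rfl⟩
    exact ⟨g * m, i, rfl, rfl⟩
  rw [tree, fromRel_adj] at h ⊢
  exact ⟨(MulAction.injective g).ne h.1, h.2.imp (hR u v) (hR v u)⟩

theorem tree_reachable_inl_one (m : CoprodI C) : (tree C).Reachable (.inl 1) (.inl m) := by
  induction m using CoprodI.induction_on with
  | one => rfl
  | of i x =>
    have hx : ((of x : CoprodI C) : CoprodI C ⧸ (of : C i →* CoprodI C).range) = (1 : CoprodI C) :=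
      QuotientGroup.eq.mpr ⟨x⁻¹, by simp⟩
    exact (tree_adj_inl_inr.mpr rfl).reachable.trans (tree_adj_inl_inr.mpr hx).reachable.symm
  | mul x y hx hy =>
    have hxy := hy.map (smulHom tree_adj_smul x)
    rw [smulHom_apply, smulHom_apply, Sum.smul_inl, Sum.smul_inl, smul_eq_mul, mul_one] at hxy
    exact hx.trans hxy

theorem tree_connected : (tree C).Connected := by
  have h : ∀ v : TreeVertex C, (tree C).Reachable (.inl 1) v := by
    rintro (m | ⟨i, x⟩)
    · exact tree_reachable_inl_one m
    · obtain ⟨m, rfl⟩ := QuotientGroup.mk_surjective x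
      exact (tree_reachable_inl_one m).trans (tree_adj_inl_inr.mpr rfl).reachable
  exact .mk fun u v => (h u).symm.trans (h v)

theorem isOfFinOrder_of_smul_eq_self [∀ i, Finite (C i)] {g : CoprodI C} {v : TreeVertex C}
    (h : g • v = v) : IsOfFinOrder g := by
  rcases v with m | ⟨i, x⟩
  · simp_all
  · obtain ⟨m, rfl⟩ := QuotientGroup.mk_surjective x
    have hm : ((g * m : CoprodI C) : CoprodI C ⧸ (of : C i →* CoprodI C).range) = m := by
      simpa using h
    obtain ⟨c, hc⟩ := QuotientGroup.eq.mp hm.symm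
    have hconj := (MulAut.conj m).toMonoidHom.isOfFinOrder
      ((of : C i →* CoprodI C).isOfFinOrder (isOfFinOrder_of_finite c))
    simpa [hc, mul_assoc] using hconj

theorem exists_word_cons_cons {a a₁ b : CoprodI C} {i : ι}
    {x : CoprodI C ⧸ (of : C i →* CoprodI C).range}
    (h : (tree C).Adj (.inl a) (.inr ⟨i, x⟩)) (h₁ : (tree C).Adj (.inr ⟨i, x⟩) (.inl a₁))
    (w : (tree C).Walk (.inl a₁) (.inl b)) (hw : (Walk.cons h₁ w).IsPath) (ha : a ≠ a₁)
    (W : Word C) (hW : W.prod = a₁⁻¹ * b)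
    (hWidx : ∀ j, W.fstIdx = some j → .inr ⟨j, ↑a₁⟩ ∈ w.support) :
    ∃ W' : Word C, W'.prod = a⁻¹ * b ∧ W'.fstIdx = some i := by
  rw [tree_adj_inl_inr] at h
  rw [adj_comm, tree_adj_inl_inr] at h₁
  have hidx : W.fstIdx ≠ some i := fun hi =>
    ((Walk.cons_isPath_iff _ _).mp hw).2 (h₁ ▸ hWidx i hi)
  obtain ⟨c, hc⟩ := QuotientGroup.eq.mp (h.trans h₁.symm)
  have hc1 : c ≠ 1 := by
    rintro rfl
    exact ha (inv_mul_eq_one.mp (by simpa using hc.symm))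
  exact ⟨.cons c W hidx hc1, by simp [hc, hW, mul_assoc], Word.fstIdx_cons ..⟩

-- The condition on `fstIdx` is what keeps the word reduced when the path is extended backwards.
theorem exists_word_of_isPath : ∀ {a b : CoprodI C} (w : (tree C).Walk (.inl a) (.inl b)),
    w.IsPath → ∃ W : Word C, W.prod = a⁻¹ * b ∧ ∀ i, W.fstIdx = some i → .inr ⟨i, ↑a⟩ ∈ w.support
  | _, _, .nil, _ => ⟨.empty, by simp, by simp [Word.fstIdx]⟩
  | _, _, .cons (v := .inl _) h _, _ => absurd h not_tree_adj_inl_inl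
  | _, _, .cons (v := .inr _) _ (.cons (v := .inr _) h₁ _), _ => absurd h₁ not_tree_adj_inr_inr
  | a, _, .cons (v := .inr ⟨i, x⟩) h (.cons (v := .inl a₁) h₁ w), hw => by
    obtain ⟨W, hW, hWidx⟩ := exists_word_of_isPath w hw.of_cons.of_cons
    have ha : a ≠ a₁ := by
      rintro rfl
      exact ((Walk.cons_isPath_iff _ _).mp hw).2 (by simp)
    obtain ⟨W', hW', hW'idx⟩ := exists_word_cons_cons h h₁ w hw.of_cons ha W hW hWidx
    refine ⟨W', hW', fun j hj => ?_⟩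
    obtain rfl : j = i := Option.some_injective _ (hj.symm.trans hW'idx)
    simp [(tree_adj_inl_inr.mp h).symm]

theorem tree_isAcyclic : (tree C).IsAcyclic := by
  -- A cycle through `.inl a` spells a nonempty reduced word with product `a⁻¹ * a = 1`.
  classical
  have hcycle : ∀ (a : CoprodI C) (c : (tree C).Walk (.inl a) (.inl a)), ¬c.IsCycle
    | _, .nil, hc => hc.not_nil Walk.Nil.nil
    | _, .cons (v := .inl _) h _, _ => not_tree_adj_inl_inl h
    | _, .cons (v := .inr _) _ (.cons (v := .inr _) h₁ _), _ => not_tree_adj_inr_inr h₁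
    | a, .cons (v := .inr ⟨i, x⟩) h (.cons (v := .inl a₁) h₁ w), hc => by
      obtain ⟨hw, hedge⟩ := (Walk.cons_isCycle_iff _ h).mp hc
      have ha : a ≠ a₁ := by
        rintro rfl
        exact hedge (by simp [Sym2.eq_swap])
      obtain ⟨W, hW, hWidx⟩ := exists_word_of_isPath w hw.of_cons
      obtain ⟨W', hW', hW'idx⟩ := exists_word_cons_cons h h₁ w hw ha W hW hWidx
      have : W' = .empty := Word.equiv.symm.injective
        (show W'.prod = Word.empty.prod by rw [hW', inv_mul_cancel, Word.prod_empty])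
      simp [this, Word.fstIdx] at hW'idx
  intro v c hc
  rcases v with a | s
  · exact hcycle a c hc
  · cases c with
    | nil => exact hc.not_nil Walk.Nil.nil
    | @cons _ u _ h c' =>
      rcases u with a | _
      · exact hcycle a _ (hc.rotate (u := .inl a) (by simp))
      · exact not_tree_adj_inr_inr h

theorem tree_isTree : (tree C).IsTree := ⟨tree_connected, tree_isAcyclic⟩

theorem exists_surjective_int_of_injective [∀ i, Finite (C i)] {K : Type*} [Group K]
    [Nontrivial K] (f : K →* CoprodI C) (hf : Function.Injective f)
    (htf : ∀ g : K, IsOfFinOrder g → g = 1) :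
    ∃ φ : K →* Multiplicative ℤ, Function.Surjective φ := by
  let _ : MulAction K (TreeVertex C) := .compHom _ f
  have hfree : ∀ (g : K) (v : TreeVertex C), g • v = v → g = 1 := fun g v h =>
    htf g (hf.isOfFinOrder_iff.mp (isOfFinOrder_of_smul_eq_self h))
  refine exists_surjective_int_of_isTree (fun g _ _ h => tree_adj_smul (f g) h) tree_isTree
    hfree fun g u v _ hu hv => ?_
  have hsq : g ^ 2 = 1 := hfree _ u (by rw [pow_two, mul_smul, hu, hv])
  exact htf g (isOfFinOrder_iff_pow_eq_one.mpr ⟨2, two_pos, hsq⟩)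

end Monoid.CoprodI

theorem stmt_14_general {G : Type*} [Group G] (N : Subgroup G) [N.Normal]
    {ι : Type*} (C : ι → Type*) [∀ i, Group (C i)] [∀ i, Finite (C i)]
    (e : N ≃* Monoid.CoprodI C)
    (hquot : ∀ H : Subgroup (G ⧸ N), H.FG →
      H = ⊥ ∨ ∃ φ : H →* Multiplicative ℤ, Function.Surjective φ) :
    ∀ H : Subgroup G, (∀ h ∈ H, IsOfFinOrder h → h = 1) →
      ∀ K : Subgroup H, K.FG →
        K = ⊥ ∨ ∃ φ : K →* Multiplicative ℤ, Function.Surjective φ := by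
  intro H hHtf K hKfg
  obtain hK | hK := K.bot_or_nontrivial
  · exact Or.inl hK
  right
  let j : K →* G := H.subtype.comp K.subtype
  have hj : Function.Injective j := Subtype.val_injective.comp Subtype.val_injective
  have hKtf : ∀ g : K, IsOfFinOrder g → g = 1 := fun g hg =>
    hj (by rw [map_one]; exact hHtf _ (g : H).2 (j.isOfFinOrder hg))
  have : Group.FG K := (Group.fg_iff_subgroup_fg K).mpr hKfg
  let q : K →* G ⧸ N := (QuotientGroup.mk' N).comp j
  obtain hq | ⟨ψ, hψ⟩ := hquot q.range
    ((Group.fg_iff_subgroup_fg _).mp (Group.fg_of_surjective q.rangeRestrict_surjective))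
  · have hjN : ∀ x, j x ∈ N := fun x =>
      (QuotientGroup.eq_one_iff _).mp (Subgroup.mem_bot.mp (hq ▸ q.mem_range.mpr ⟨x, rfl⟩))
    exact Monoid.CoprodI.exists_surjective_int_of_injective
      (e.toMonoidHom.comp (j.codRestrict N hjN))
      (e.injective.comp ((Set.injective_codRestrict hjN).mpr hj)) hKtf
  · exact ⟨ψ.comp q.rangeRestrict, hψ.comp q.rangeRestrict_surjective⟩

/-- If `N ⊴ G` is a free product of finite cyclic groups and `G/N` is locally
indicable, then every torsion-free subgroup of `G` is locally indicable. -/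
theorem stmt_14 {G : Type*} [Group G] (N : Subgroup G) [N.Normal]
    {ι : Type*} (C : ι → Type*) [∀ i, Group (C i)] [∀ i, Finite (C i)]
    (hcyc : ∀ i, IsCyclic (C i)) (e : N ≃* Monoid.CoprodI C)
    (hquot : ∀ H : Subgroup (G ⧸ N), H.FG →
      H = ⊥ ∨ ∃ φ : H →* Multiplicative ℤ, Function.Surjective φ) :
    ∀ H : Subgroup G, (∀ h ∈ H, IsOfFinOrder h → h = 1) →
      ∀ K : Subgroup H, K.FG →
        K = ⊥ ∨ ∃ φ : K →* Multiplicative ℤ, Function.Surjective φ :=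
  stmt_14_general N C e hquot
end
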